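/- arXiv:2101.10689 — 7 statements merged into one kernel-verified Lean document; each statement's English description precedes it below -/
import Mathlib

section
/- Let F be a field, n ≥ 1, and let Λ ∈ F^{n×n} be a non-derogatory Jordan matrix, i.e. Λ has diagonal entries d_1,…,d_n, superdiagonal entries s_1,…,s_{n−1} ∈ {0,1}, all other entries zero, where s_i = 1 implies d_i = d_{i+1} (each Jordan block has a constant diagonal), and whenever i ≤ j and d_i = d_j one has s_k = 1 for all i ≤ k < j (equal eigenvalues occur only within a single block, so every eigenvalue has geometric multiplicity 1). Then both (Λ, 𝟙_n) and (Λᵀ, 𝟙_n) are controllable, where 𝟙_n is the all-ones vector. -/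
/-!
By the Popov–Belevitch–Hautus test, `(A, p)` is controllable as soon as no left eigenvector
of `A` is orthogonal to `p`; over an arbitrary field this needs the characteristic polynomial
of `A` to split, which it does for the triangular matrix `Λ`. A left eigenvector `v` of `Λ`
for the eigenvalue `μ` is supported on the last index `b` of the Jordan block of `μ`: the
column equations `μ v_j = d_j v_j + s_{j-1} v_{j-1}` kill every other entry, because
non-derogatoriness makes that block the only place where `μ` occurs on the diagonal. Hence
`v ⬝ᵥ 𝟙 = v_b ≠ 0`. Right eigenvectors of `Λ`, needed for `Λᵀ`, are left eigenvectors of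
`Λᵀ` with the index order reversed, which is again a non-derogatory Jordan matrix.
-/

open Matrix

/-- A pair `(X, p)` is controllable if `p, Xp, …, X^{n−1}p` span the whole space. -/
def Controllable {F : Type*} [Field F] {n : ℕ} (X : Matrix (Fin n) (Fin n) F)
    (p : Fin n → F) : Prop :=
  Submodule.span F (Set.range fun i : Fin n => (X ^ (i : ℕ)) *ᵥ p) = ⊤

open Polynomial

theorem Module.End.exists_eigenvector_mem_of_aeval_prod_apply_eq_zero {R M : Type*}
    [CommRing R] [AddCommGroup M] [Module R M] {T : Module.End R M} {W : Submodule R M}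
    (hW : ∀ w ∈ W, T w ∈ W) (s : Multiset R) {w : M} (hwW : w ∈ W) (hw : w ≠ 0)
    (hs : aeval T (s.map fun a => X - C a).prod w = 0) :
    ∃ μ ∈ s, ∃ v ∈ W, v ≠ 0 ∧ T v = μ • v := by
  induction s using Multiset.induction_on generalizing w with
  | empty => exact absurd (by simpa using hs) hw
  | cons a s ih =>
    by_cases ha : T w = a • w
    · exact ⟨a, Multiset.mem_cons_self a s, w, hwW, hw, ha⟩
    rw [Multiset.map_cons, Multiset.prod_cons, mul_comm, map_mul] at hs
    obtain ⟨μ, hμ, hv⟩ := ih (W.sub_mem (hW w hwW) (W.smul_mem a hwW)) (sub_ne_zero.2 ha)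
      (by simpa [Algebra.algebraMap_eq_smul_one] using hs)
    exact ⟨μ, Multiset.mem_cons_of_mem hμ, hv⟩

section Controllability

variable {F : Type*} [Field F] {n : ℕ} {A : Matrix (Fin n) (Fin n) F} {p : Fin n → F}

theorem dotProduct_pow_mulVec_eq_zero {w : Fin n → F}
    (hw : ∀ i : Fin n, w ⬝ᵥ (A ^ (i : ℕ) *ᵥ p) = 0) (k : ℕ) : w ⬝ᵥ (A ^ k *ᵥ p) = 0 := by
  rw [pow_eq_aeval_mod_charpoly, aeval_eq_sum_range, sum_mulVec, dotProduct_sum]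
  refine Finset.sum_eq_zero fun j _ => ?_
  rw [smul_mulVec, dotProduct_smul]
  by_cases hj : j < n
  · rw [hw ⟨j, hj⟩, smul_zero]
  · rw [coeff_eq_zero_of_degree_lt, zero_smul]
    calc _ < A.charpoly.degree := degree_modByMonic_lt _ A.charpoly_monic
      _ ≤ j := by rw [charpoly_degree_eq_dim, Fintype.card_fin]; exact_mod_cast not_lt.1 hj

theorem exists_ne_zero_dotProduct_pow_mulVec_eq_zero (h : ¬Controllable A p) :
    ∃ w ≠ 0, ∀ k : ℕ, w ⬝ᵥ (A ^ k *ᵥ p) = 0 := by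
  obtain ⟨f, hf0, hf⟩ := Submodule.exists_le_ker_of_lt_top _ (lt_top_iff_ne_top.2 h)
  refine ⟨(dotProductEquiv F (Fin n)).symm f, by simpa using hf0,
    dotProduct_pow_mulVec_eq_zero fun i => ?_⟩
  rw [← dotProductEquiv_apply_apply, LinearEquiv.apply_symm_apply]
  exact hf (Submodule.subset_span ⟨i, rfl⟩)

variable (A p) in
def krylovAnnihilator : Submodule F (Fin n → F) where
  carrier := {w | ∀ k : ℕ, w ⬝ᵥ (A ^ k *ᵥ p) = 0}
  add_mem' hv hw k := by rw [add_dotProduct, hv k, hw k, add_zero]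
  zero_mem' k := zero_dotProduct _
  smul_mem' c w hw k := by rw [smul_dotProduct, hw k, smul_zero]

theorem controllable_of_forall_vecMul_eq_smul {d : Fin n → F}
    (hA : A.charpoly = ∏ i, (X - C (d i)))
    (h : ∀ i v, v ᵥ* A = d i • v → v ⬝ᵥ p = 0 → v = 0) : Controllable A p := by
  by_contra hc
  obtain ⟨w, hw0, hw⟩ := exists_ne_zero_dotProduct_pow_mulVec_eq_zero hc
  have hW : ∀ v ∈ krylovAnnihilator A p, toLin' Aᵀ v ∈ krylovAnnihilator A p := fun v hv k => by
    rw [toLin'_apply, mulVec_transpose, ← dotProduct_mulVec, mulVec_mulVec, ← pow_succ']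
    exact hv (k + 1)
  have hT : aeval (toLin' Aᵀ) ((Finset.univ.val.map d).map fun a => X - C a).prod = 0 := by
    rw [Multiset.map_map, ← Finset.prod_eq_multiset_prod]
    simpa [← hA, charpoly_transpose] using LinearMap.aeval_self_charpoly (toLin' Aᵀ)
  obtain ⟨μ, hμ, v, hvW, hv0, hv⟩ :=
    Module.End.exists_eigenvector_mem_of_aeval_prod_apply_eq_zero hW _ hw hw0 (by rw [hT]; rfl)
  obtain ⟨i, -, rfl⟩ := Multiset.mem_map.1 hμ
  rw [toLin'_apply, mulVec_transpose] at hv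
  exact hv0 (h i v hv (by simpa using hvW 0))

end Controllability

structure IsNonderogatoryJordan {R : Type*} [Zero R] [One R] {n : ℕ}
    (Λ : Matrix (Fin n) (Fin n) R) : Prop where
  apply_eq_zero : ∀ i j : Fin n, (j : ℕ) ≠ (i : ℕ) → (j : ℕ) ≠ (i : ℕ) + 1 → Λ i j = 0
  superdiag : ∀ i j : Fin n, (j : ℕ) = (i : ℕ) + 1 → Λ i j = 0 ∨ Λ i j = 1
  diag_eq_of_superdiag_eq_one : ∀ i j : Fin n, (j : ℕ) = (i : ℕ) + 1 → Λ i j = 1 → Λ i i = Λ j j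
  superdiag_eq_one_of_diag_eq : ∀ i j : Fin n, i ≤ j → Λ i i = Λ j j →
    ∀ k l : Fin n, i ≤ k → (l : ℕ) = (k : ℕ) + 1 → l ≤ j → Λ k l = 1

namespace IsNonderogatoryJordan

variable {n : ℕ}

theorem reverse_transpose {R : Type*} [Zero R] [One R] {Λ : Matrix (Fin n) (Fin n) R}
    (hΛ : IsNonderogatoryJordan Λ) : IsNonderogatoryJordan (Λᵀ.submatrix Fin.rev Fin.rev) where
  apply_eq_zero i j h₁ h₂ := hΛ.apply_eq_zero j.rev i.rev (by simp only [Fin.val_rev]; omega)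
    (by simp only [Fin.val_rev]; omega)
  superdiag i j h := hΛ.superdiag j.rev i.rev (by simp only [Fin.val_rev]; omega)
  diag_eq_of_superdiag_eq_one i j h h₁ :=
    (hΛ.diag_eq_of_superdiag_eq_one j.rev i.rev (by simp only [Fin.val_rev]; omega) h₁).symm
  superdiag_eq_one_of_diag_eq i j hij hd k l hik hl hlj :=
    hΛ.superdiag_eq_one_of_diag_eq j.rev i.rev (Fin.rev_le_rev.2 hij) hd.symm l.rev k.rev
      (Fin.rev_le_rev.2 hlj) (by simp only [Fin.val_rev]; omega) (Fin.rev_le_rev.2 hik)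

variable {R : Type*} [CommRing R] {Λ : Matrix (Fin n) (Fin n) R}

theorem charpoly_eq (hΛ : IsNonderogatoryJordan Λ) : Λ.charpoly = ∏ i, (X - C (Λ i i)) :=
  charpoly_of_isUpperTriangular Λ fun i j (hij : j < i) =>
    hΛ.apply_eq_zero i j (by omega) (by omega)

theorem vecMul_apply_of_val_eq_zero (hΛ : IsNonderogatoryJordan Λ) (v : Fin n → R)
    {j : Fin n} (hj : (j : ℕ) = 0) : (v ᵥ* Λ) j = v j * Λ j j := by
  refine Finset.sum_eq_single j (fun k _ hk => ?_) (fun h => (h (Finset.mem_univ _)).elim)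
  exact mul_eq_zero_of_right _ (hΛ.apply_eq_zero k j (fun h => hk (Fin.ext h.symm)) (by omega))

theorem vecMul_apply_of_val_eq_succ (hΛ : IsNonderogatoryJordan Λ) (v : Fin n → R)
    {j k : Fin n} (hjk : (j : ℕ) = k + 1) : (v ᵥ* Λ) j = v k * Λ k j + v j * Λ j j := by
  refine Finset.sum_eq_add k j (fun h => by rw [h] at hjk; omega) (fun l _ hl => ?_)
    (fun h => (h (Finset.mem_univ _)).elim) (fun h => (h (Finset.mem_univ _)).elim)
  exact mul_eq_zero_of_right _
    (hΛ.apply_eq_zero l j (fun h => hl.2 (Fin.ext h.symm)) (fun h => hl.1 (Fin.ext (by omega))))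

variable {v : Fin n → R} {μ : R} {b : Fin n}

theorem superdiag_eq_zero_of_isGreatest (hΛ : IsNonderogatoryJordan Λ)
    (hb : IsGreatest {j | Λ j j = μ} b) {l : Fin n} (hl : (l : ℕ) = b + 1) : Λ b l = 0 :=
  (hΛ.superdiag b l hl).resolve_right fun h => by
    have : l ≤ b := hb.2 ((hΛ.diag_eq_of_superdiag_eq_one b l hl h).symm.trans hb.1)
    omega

theorem vecMul_eq_smul_apply_eq_zero_of_lt (hΛ : IsNonderogatoryJordan Λ)
    (hv : v ᵥ* Λ = μ • v) (hb : IsGreatest {j | Λ j j = μ} b) {j : Fin n} (hj : Λ j j = μ)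
    (hjb : j < b) : v j = 0 := by
  obtain ⟨l, hl⟩ : ∃ l : Fin n, (l : ℕ) = j + 1 := ⟨⟨j + 1, by omega⟩, rfl⟩
  have hjl : Λ j l = 1 := hΛ.superdiag_eq_one_of_diag_eq j b hjb.le (hj.trans hb.1.symm) j l
    le_rfl hl (by omega)
  have hll : Λ l l = μ := (hΛ.diag_eq_of_superdiag_eq_one j l hl hjl).symm.trans hj
  have hcol := hΛ.vecMul_apply_of_val_eq_succ v hl
  rw [hv, hjl, hll, Pi.smul_apply, smul_eq_mul] at hcol
  linear_combination -hcol

theorem vecMul_eq_smul_apply_eq_zero [IsDomain R] (hΛ : IsNonderogatoryJordan Λ)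
    (hv : v ᵥ* Λ = μ • v) (hb : IsGreatest {j | Λ j j = μ} b) {j : Fin n} (hjb : j ≠ b) :
    v j = 0 := by
  induction j using WellFoundedLT.induction with
  | _ j ih =>
  by_cases hj : Λ j j = μ
  · exact hΛ.vecMul_eq_smul_apply_eq_zero_of_lt hv hb hj (lt_of_le_of_ne (hb.2 hj) hjb)
  have hcol : (v ᵥ* Λ) j = v j * Λ j j → v j = 0 := fun h => by
    rw [hv, Pi.smul_apply, smul_eq_mul, mul_comm] at h
    exact (mul_eq_mul_left_iff.1 h).resolve_left (Ne.symm hj)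
  obtain hj0 | ⟨k, hk⟩ : (j : ℕ) = 0 ∨ ∃ k : Fin n, (j : ℕ) = k + 1 := by
    rcases Nat.eq_zero_or_eq_succ_pred (j : ℕ) with h | h
    · exact .inl h
    · exact .inr ⟨⟨(j : ℕ) - 1, by omega⟩, by simp only; omega⟩
  · exact hcol (hΛ.vecMul_apply_of_val_eq_zero v hj0)
  have hprev : v k * Λ k j = 0 := by
    by_cases hkb : k = b
    · subst hkb; rw [hΛ.superdiag_eq_zero_of_isGreatest hb hk, mul_zero]
    · rw [ih k (by omega) hkb, zero_mul]
  exact hcol (by rw [hΛ.vecMul_apply_of_val_eq_succ v hk, hprev, zero_add])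

theorem eq_zero_of_vecMul_eq_smul [IsDomain R] (hΛ : IsNonderogatoryJordan Λ) (i : Fin n)
    (hv : v ᵥ* Λ = Λ i i • v) (hv1 : v ⬝ᵥ (fun _ => 1) = 0) : v = 0 := by
  have : Nonempty (Fin n) := ⟨i⟩
  obtain ⟨b, hb⟩ := (Set.toFinite {j | Λ j j = Λ i i}).bddAbove.exists_isGreatest_of_nonempty
    ⟨i, rfl⟩
  have hsupp : ∀ j, j ≠ b → v j = 0 := fun j => hΛ.vecMul_eq_smul_apply_eq_zero hv hb
  have hvb : v b = 0 := by
    rw [← hv1, dotProduct, Finset.sum_eq_single b (fun j _ hj => by rw [hsupp j hj, zero_mul])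
      (fun h => (h (Finset.mem_univ _)).elim), mul_one]
  funext j
  by_cases hjb : j = b
  · rw [hjb, hvb, Pi.zero_apply]
  · exact hsupp j hjb

theorem eq_zero_of_mulVec_eq_smul [IsDomain R] (hΛ : IsNonderogatoryJordan Λ) (i : Fin n)
    (hv : Λ *ᵥ v = Λ i i • v) (hv1 : v ⬝ᵥ (fun _ => 1) = 0) : v = 0 := by
  have hrev : (v ∘ Fin.rev) ᵥ* Λᵀ.submatrix Fin.rev Fin.rev =
      (Λᵀ.submatrix Fin.rev Fin.rev) i.rev i.rev • (v ∘ Fin.rev) := by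
    rw [← transpose_submatrix, vecMul_transpose]
    change Λ.submatrix Fin.revPerm Fin.revPerm *ᵥ (v ∘ Fin.revPerm) = _
    rw [submatrix_mulVec_equiv]
    ext j
    simp [Function.comp_def, hv]
  have hrev1 : (v ∘ Fin.rev) ⬝ᵥ (fun _ => 1) = 0 := by
    rw [← hv1]
    exact Equiv.sum_comp Fin.revPerm fun j => v j * 1
  have := hΛ.reverse_transpose.eq_zero_of_vecMul_eq_smul i.rev hrev hrev1
  funext j
  simpa using congrFun this j.rev

end IsNonderogatoryJordan

theorem nonderogatory_jordan_controllable_general {F : Type*} [Field F] {n : ℕ}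
    (Λ : Matrix (Fin n) (Fin n) F)
    -- all entries off the diagonal and superdiagonal vanish
    (hzero : ∀ i j : Fin n, (j : ℕ) ≠ (i : ℕ) → (j : ℕ) ≠ (i : ℕ) + 1 → Λ i j = 0)
    -- superdiagonal entries are 0 or 1
    (hsuper : ∀ i j : Fin n, (j : ℕ) = (i : ℕ) + 1 → Λ i j = 0 ∨ Λ i j = 1)
    -- each Jordan block has a constant diagonal: s_i = 1 implies d_i = d_{i+1}
    (hblock : ∀ i j : Fin n, (j : ℕ) = (i : ℕ) + 1 → Λ i j = 1 → Λ i i = Λ j j)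
    -- equal eigenvalues occur only within a single block: if i ≤ j and d_i = d_j then
    -- s_k = 1 for all i ≤ k < j
    (hnonderog : ∀ i j : Fin n, i ≤ j → Λ i i = Λ j j →
      ∀ k l : Fin n, i ≤ k → (l : ℕ) = (k : ℕ) + 1 → l ≤ j → Λ k l = 1) :
    Controllable Λ (fun _ => (1 : F)) ∧ Controllable Λᵀ (fun _ => (1 : F)) := by
  have hΛ : IsNonderogatoryJordan Λ := ⟨hzero, hsuper, hblock, hnonderog⟩
  constructor
  · exact controllable_of_forall_vecMul_eq_smul hΛ.charpoly_eq fun i _ =>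
      hΛ.eq_zero_of_vecMul_eq_smul i
  · refine controllable_of_forall_vecMul_eq_smul (by rw [charpoly_transpose, hΛ.charpoly_eq])
      fun i v hv => hΛ.eq_zero_of_mulVec_eq_smul i ?_
    rwa [vecMul_transpose] at hv

/-- If `Λ` is a non-derogatory Jordan matrix over a field `F`, then both `(Λ, 𝟙)` and
`(Λᵀ, 𝟙)` are controllable, where `𝟙` is the all-ones vector. -/
theorem nonderogatory_jordan_controllable {F : Type*} [Field F] {n : ℕ} (hn : 1 ≤ n)
    (Λ : Matrix (Fin n) (Fin n) F)
    -- all entries off the diagonal and superdiagonal vanish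
    (hzero : ∀ i j : Fin n, (j : ℕ) ≠ (i : ℕ) → (j : ℕ) ≠ (i : ℕ) + 1 → Λ i j = 0)
    -- superdiagonal entries are 0 or 1
    (hsuper : ∀ i j : Fin n, (j : ℕ) = (i : ℕ) + 1 → Λ i j = 0 ∨ Λ i j = 1)
    -- each Jordan block has a constant diagonal: s_i = 1 implies d_i = d_{i+1}
    (hblock : ∀ i j : Fin n, (j : ℕ) = (i : ℕ) + 1 → Λ i j = 1 → Λ i i = Λ j j)
    -- equal eigenvalues occur only within a single block: if i ≤ j and d_i = d_j then
    -- s_k = 1 for all i ≤ k < j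
    (hnonderog : ∀ i j : Fin n, i ≤ j → Λ i i = Λ j j →
      ∀ k l : Fin n, i ≤ k → (l : ℕ) = (k : ℕ) + 1 → l ≤ j → Λ k l = 1) :
    Controllable Λ (fun _ => (1 : F)) ∧ Controllable Λᵀ (fun _ => (1 : F)) :=
  nonderogatory_jordan_controllable_general Λ hzero hsuper hblock hnonderog
end

section
/- Let A ∈ ℝ^{n×n}, C ∈ ℝ^{m×n}, K ∈ ℝ^{n×m} with columns K_1,…,K_m, and Λ ∈ ℝ^{n×n}. Suppose matrices F_1,…,F_m ∈ ℝ^{n×n} satisfy F_iΛ = (A − KCA)F_i and F_i𝟙_n = K_i for each i, where 𝟙_n is the all-ones vector. Let y_1,…,y_m : ℕ → ℝ be arbitrary scalar sequences, and define sequences ξ_i : ℕ → ℝⁿ by ξ_i(0) = 0 and ξ_i(k+1) = Λξ_i(k) + 𝟙_n y_i(k+1), and a sequence x̂ : ℕ → ℝⁿ by x̂(0) = 0 and x̂(k+1) = (A − KCA)x̂(k) + Σ_{i=1}^m K_i y_i(k+1). Then for every k ≥ 0, x̂(k) = Σ_{i=1}^m F_i ξ_i(k). -/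
open Matrix

/-- Lossless decomposition of the steady-state Kalman filter: the centralized
recursion `x̂(k+1) = (A − KCA)x̂(k) + Σᵢ Kᵢ yᵢ(k+1)` is recovered as the fixed linear
combination `Σᵢ Fᵢ ξᵢ(k)` of the local filters `ξᵢ(k+1) = Λξᵢ(k) + 𝟙 yᵢ(k+1)`,
whenever `FᵢΛ = (A − KCA)Fᵢ` and `Fᵢ𝟙 = Kᵢ`. -/
theorem kalman_lossless_decomposition {n m : ℕ}
    (A : Matrix (Fin n) (Fin n) ℝ) (C : Matrix (Fin m) (Fin n) ℝ)
    (K : Matrix (Fin n) (Fin m) ℝ) (Λ : Matrix (Fin n) (Fin n) ℝ)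
    (F : Fin m → Matrix (Fin n) (Fin n) ℝ)
    (hF1 : ∀ i, F i * Λ = (A - K * C * A) * F i)
    (hF2 : ∀ i, (F i) *ᵥ (fun _ => (1 : ℝ)) = fun r => K r i)
    (y : Fin m → ℕ → ℝ)
    (ξ : Fin m → ℕ → Fin n → ℝ)
    (hξ0 : ∀ i, ξ i 0 = 0)
    (hξ : ∀ i k, ξ i (k + 1) = Λ *ᵥ ξ i k + fun _ => y i (k + 1))
    (xhat : ℕ → Fin n → ℝ)
    (hx0 : xhat 0 = 0)
    (hx : ∀ k, xhat (k + 1) =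
      (A - K * C * A) *ᵥ xhat k + ∑ i, y i (k + 1) • (fun r => K r i)) :
    ∀ k, xhat k = ∑ i, (F i) *ᵥ ξ i k := by
  intro k
  induction k with
  | zero =>
    simp [hx0, hξ0]
  | succ k ih =>
    rw [hx k, ih]
    have key : ∀ i : Fin m, (F i) *ᵥ ξ i (k + 1)
        = (A - K * C * A) *ᵥ ((F i) *ᵥ ξ i k) + y i (k + 1) • (fun r => K r i) := by
      intro i
      rw [hξ i k, mulVec_add, mulVec_mulVec, hF1 i, ← mulVec_mulVec]
      congr 1
      have : (fun _ : Fin n => y i (k + 1)) = y i (k + 1) • (fun _ => (1 : ℝ)) := by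
        funext r; simp
      rw [this, mulVec_smul, hF2 i]
    simp only [key]
    rw [Finset.sum_add_distrib]
    congr 1
    simp only [← Matrix.mulVecLin_apply, ← map_sum]
end

section
/- Let S ∈ ℝ^{n×n}, β ∈ ℝⁿ, and set H_j = e_j βᵀ for j = 1,…,n, where e_j is the j-th standard basis vector of ℝⁿ. For i = 1,…,m, let p_{i1},…,p_{in} be real polynomials, let F_i = Σ_{j=1}^n H_j p_{ij}(S) ∈ ℝ^{n×n}, and let T_i ∈ ℝ^{n²} be the stacked vector T_i = col(p_{i1}(S)𝟙_n, …, p_{in}(S)𝟙_n), with 𝟙_n the all-ones vector. Set F = [F_1, …, F_m] ∈ ℝ^{n×mn}, T = [T_1, …, T_m] ∈ ℝ^{n²×m}, and H = [H_1, …, H_n] ∈ ℝ^{n×n²}. Then for every t ≥ 0, F (I_m ⊗ S)^t (I_m ⊗ 𝟙_n) = H (I_n ⊗ S)^t T; consequently, the mn-dimensional system with state matrix I_m ⊗ S, input matrix I_m ⊗ 𝟙_n and output matrix F has the same impulse response (hence the same transfer function) as the n²-dimensional system with state matrix I_n ⊗ S, input matrix T and output matrix H. -/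
open Matrix Kronecker

lemma sum_if_const {α} [Fintype α] (c : Prop) [Decidable c] (f : α → ℝ) :
    ∑ x, (if c then f x else 0) = if c then ∑ x, f x else 0 := by
  split <;> simp

/-- Model reduction: with `Hⱼ = eⱼβᵀ`, `Fᵢ = Σⱼ Hⱼ pᵢⱼ(S)`,
`Tᵢ = col(pᵢ₁(S)𝟙, …, pᵢₙ(S)𝟙)`, `F = [F₁,…,F_m]`, `T = [T₁,…,T_m]`,
`H = [H₁,…,H_n]`, one has `F (I_m ⊗ S)^t (I_m ⊗ 𝟙_n) = H (I_n ⊗ S)^t T` for all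
`t ≥ 0`, i.e. the `mn`-dimensional system `(I_m ⊗ S, I_m ⊗ 𝟙_n, F)` and the
`n²`-dimensional system `(I_n ⊗ S, T, H)` have the same impulse response. -/
theorem model_reduction {n m : ℕ}
    (S : Matrix (Fin n) (Fin n) ℝ) (β : Fin n → ℝ)
    (p : Fin m → Fin n → Polynomial ℝ)
    (H : Fin n → Matrix (Fin n) (Fin n) ℝ)
    (hH : ∀ j, H j = vecMulVec (Pi.single j 1) β)
    (F : Fin m → Matrix (Fin n) (Fin n) ℝ)
    (hF : ∀ i, F i = ∑ j, H j * (Polynomial.aeval S (p i j)))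
    (Fbig : Matrix (Fin n) (Fin m × Fin n) ℝ)
    (hFbig : Fbig = Matrix.of fun r q => F q.1 r q.2)
    (T : Matrix (Fin n × Fin n) (Fin m) ℝ)
    (hT : T = Matrix.of fun q i => ((Polynomial.aeval S (p i q.1)) *ᵥ fun _ => (1 : ℝ)) q.2)
    (Hbig : Matrix (Fin n) (Fin n × Fin n) ℝ)
    (hHbig : Hbig = Matrix.of fun r q => H q.1 r q.2)
    (Bin : Matrix (Fin m × Fin n) (Fin m) ℝ)
    (hBin : Bin = Matrix.of fun q i => if q.1 = i then (1 : ℝ) else 0) :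
    ∀ t : ℕ,
      Fbig * ((1 : Matrix (Fin m) (Fin m) ℝ) ⊗ₖ S) ^ t * Bin =
      Hbig * ((1 : Matrix (Fin n) (Fin n) ℝ) ⊗ₖ S) ^ t * T := by
  have kron : ∀ (k t : ℕ),
      ((1 : Matrix (Fin k) (Fin k) ℝ) ⊗ₖ S) ^ t
        = (1 : Matrix (Fin k) (Fin k) ℝ) ⊗ₖ (S ^ t) := by
    intro k t
    induction t with
    | zero => simp [Matrix.one_kronecker_one]
    | succ t ih => rw [pow_succ, pow_succ, ih, ← Matrix.mul_kronecker_mul, Matrix.one_mul]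
  have hc : ∀ (q : Polynomial ℝ) (t : ℕ),
      Polynomial.aeval S q * S ^ t = S ^ t * Polynomial.aeval S q := by
    intro q t
    refine (Commute.pow_right ?_ t).eq
    induction q using Polynomial.induction_on' with
    | add a b ha hb => simpa using ha.add_left hb
    | monomial k a =>
      simp only [Polynomial.aeval_monomial]
      exact Commute.mul_left (Algebra.commutes a S) ((Commute.refl S).pow_left k)
  intro t
  subst hFbig hT hHbig hBin
  rw [kron, kron]
  ext r i
  simp only [Matrix.mul_apply, Matrix.of_apply, Fintype.sum_prod_type, kroneckerMap_apply,
    Matrix.one_apply, hF, hH, Matrix.sum_apply, Matrix.mul_apply, Matrix.vecMulVec_apply,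
    Pi.single_apply, Matrix.mulVec, dotProduct, mul_one, ite_mul, one_mul, zero_mul,
    mul_ite, mul_zero, Finset.sum_ite_eq, Finset.sum_ite_eq', Finset.mem_univ, if_true]
  simp only [sum_if_const, Finset.sum_ite_eq, Finset.sum_ite_eq', Finset.mem_univ, if_true]
  simp only [ite_mul, zero_mul, sum_if_const, Finset.sum_ite_eq, Finset.mem_univ, if_true]
  have expand : ∀ (M N : Matrix (Fin n) (Fin n) ℝ),
      ∑ x, (β ᵥ* (M * N)) x = ∑ x, ∑ x₁, (∑ c, β c * M c x₁) * N x₁ x := by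
    intro M N
    simp only [Matrix.vecMul, dotProduct, Matrix.mul_apply]
    refine Finset.sum_congr rfl fun x _ => ?_
    simp only [Finset.mul_sum, mul_assoc]
    rw [Finset.sum_comm]
    simp [Finset.sum_mul, mul_assoc]
  rw [← expand, hc, expand, Finset.sum_comm]
  refine Finset.sum_congr rfl fun x _ => ?_
  rw [Finset.mul_sum]
end

section
/- Let S ∈ ℝ^{n×n}, let 𝟙 be the all-ones vector in ℝⁿ, and let 0 < μ₂ ≤ μ_m and ζ > 0 be real numbers. Suppose P ∈ ℝ^{n×n} is a symmetric positive definite matrix satisfying the modified algebraic Riccati inequality P − SᵀPS + (1 − ζ²)·(SᵀP𝟙𝟙ᵀPS)/(𝟙ᵀP𝟙) ≻ 0 (positive definite). Define the row vector Γ = (2/(μ₂+μ_m))·(𝟙ᵀPS)/(𝟙ᵀP𝟙) ∈ ℝ^{1×n}. Then for every real μ with |1 − 2μ/(μ₂+μ_m)| ≤ ζ (in particular for every μ ∈ [μ₂, μ_m] when ζ ≥ (μ_m−μ₂)/(μ₂+μ_m)), the spectral radius of S − μ𝟙Γ is strictly less than 1. -/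
/-! With `𝟙` the all-ones vector, `c = 𝟙ᵀP𝟙`, `u = SᵀP𝟙` and `m = μ · 2/((μ₂ + μₘ) c)`,
the closed-loop matrix is the rank-one perturbation `A = S − m 𝟙uᵀ`, and expanding `AᵀPA` gives
`P − AᵀPA = (P − SᵀPS + (1 − ζ²)/c · uuᵀ) + (ζ² − (1 − mc)²)/c · uuᵀ`.
The first summand is the Riccati matrix and the second is positive semidefinite since
`|1 − mc| ≤ ζ`, so `P − AᵀPA ≻ 0` and the discrete Lyapunov (Stein) criterion applies: for an
eigenvector `v` of `A` with eigenvalue `z`, `v*(P − AᵀPA)v = (1 − |z|²) v*Pv`, so `|z| < 1`. -/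

open Matrix

namespace Matrix

variable {n : Type*} [Fintype n]

theorem re_star_dotProduct_map_ofReal_mulVec (Q : Matrix n n ℝ) (v : n → ℂ) :
    (star v ⬝ᵥ (Q.map Complex.ofReal *ᵥ v)).re =
      (fun i ↦ (v i).re) ⬝ᵥ (Q *ᵥ fun i ↦ (v i).re) +
        (fun i ↦ (v i).im) ⬝ᵥ (Q *ᵥ fun i ↦ (v i).im) := by
  simp only [dotProduct, mulVec, Finset.mul_sum, ← Finset.sum_add_distrib, Complex.re_sum]
  refine Finset.sum_congr rfl fun i _ ↦ Finset.sum_congr rfl fun j _ ↦ ?_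
  simp [Complex.mul_re, Complex.mul_im]

theorem PosDef.re_star_dotProduct_map_ofReal_mulVec_pos {Q : Matrix n n ℝ} (hQ : Q.PosDef)
    {v : n → ℂ} (hv : v ≠ 0) : 0 < (star v ⬝ᵥ (Q.map Complex.ofReal *ᵥ v)).re := by
  rw [re_star_dotProduct_map_ofReal_mulVec]
  have hre := hQ.posSemidef.dotProduct_mulVec_nonneg fun i ↦ (v i).re
  have him := hQ.posSemidef.dotProduct_mulVec_nonneg fun i ↦ (v i).im
  simp only [star_trivial] at hre him
  by_cases h : (fun i ↦ (v i).re) = 0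
  · have him_ne : (fun i ↦ (v i).im) ≠ 0 := fun h' ↦
      hv <| funext fun i ↦ Complex.ext (congrFun h i) (congrFun h' i)
    simpa using add_pos_of_nonneg_of_pos hre (hQ.dotProduct_mulVec_pos him_ne)
  · simpa using add_pos_of_pos_of_nonneg (hQ.dotProduct_mulVec_pos h) him

theorem star_dotProduct_conjTranspose_mul_mul_mulVec_of_mulVec_eq_smul {R : Type*}
    [CommRing R] [StarRing R] (M B : Matrix n n R) {v : n → R} {z : R} (hv : B *ᵥ v = z • v) :
    star v ⬝ᵥ ((Bᴴ * M * B) *ᵥ v) = star z * z * (star v ⬝ᵥ (M *ᵥ v)) := by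
  rw [← mulVec_mulVec, ← mulVec_mulVec, hv, dotProduct_mulVec, ← star_mulVec, hv, star_smul,
    mulVec_smul, smul_dotProduct, dotProduct_smul, smul_eq_mul, smul_eq_mul, mul_assoc]

theorem exists_mulVec_eq_smul_of_mem_spectrum [DecidableEq n] {K : Type*} [Field K]
    {A : Matrix n n K} {z : K} (hz : z ∈ spectrum K A) : ∃ v ≠ 0, A *ᵥ v = z • v := by
  rw [← spectrum_toLin'] at hz
  obtain ⟨v, hv⟩ := (Module.End.hasEigenvalue_iff_mem_spectrum.mpr hz).exists_hasEigenvector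
  exact ⟨v, hv.2, by simpa using hv.apply_eq_smul⟩

theorem norm_lt_one_of_mem_spectrum_map_ofReal [DecidableEq n] {A P : Matrix n n ℝ}
    (hP : P.PosDef) (hStein : (P - Aᵀ * P * A).PosDef) {z : ℂ}
    (hz : z ∈ spectrum ℂ (A.map Complex.ofReal)) : ‖z‖ < 1 := by
  obtain ⟨v, hv0, hv⟩ := exists_mulVec_eq_smul_of_mem_spectrum hz
  set P' := P.map Complex.ofReal
  have hmap : (P - Aᵀ * P * A).map Complex.ofReal =
      P' - (A.map Complex.ofReal)ᴴ * P' * A.map Complex.ofReal := by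
    have h := map_sub (Complex.ofRealHom.mapMatrix : Matrix n n ℝ →+* _) P (Aᵀ * P * A)
    simp only [map_mul, RingHom.mapMatrix_apply] at h
    rw [← conjTranspose_map _ fun _ ↦ by simp, conjTranspose_eq_transpose_of_trivial]
    exact h
  have hpos := hStein.re_star_dotProduct_map_ofReal_mulVec_pos hv0
  rw [hmap, sub_mulVec, dotProduct_sub,
    star_dotProduct_conjTranspose_mul_mul_mulVec_of_mulVec_eq_smul P' _ hv, Complex.star_def,
    Complex.conj_mul', ← Complex.ofReal_pow, Complex.sub_re, Complex.re_ofReal_mul,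
    ← one_sub_mul] at hpos
  have hnorm_sq : ‖z‖ ^ 2 < 1 := by
    linarith [(pos_iff_pos_of_mul_pos hpos).2 (hP.re_star_dotProduct_map_ofReal_mulVec_pos hv0)]
  exact (sq_lt_one_iff₀ (norm_nonneg z)).1 hnorm_sq

section RankOneFeedback

variable {R : Type*} [CommRing R] {P : Matrix n n R} (hP : P.IsSymm) (S : Matrix n n R)
  (w : n → R)
include hP

theorem transpose_mul_mul_mulVec_eq_vecMul : (Sᵀ * P) *ᵥ w = w ᵥ* (P * S) := by
  rw [← hP.eq, ← transpose_mul, mulVec_transpose, hP.eq]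

theorem transpose_mul_mul_vecMulVec_mul_mul :
    Sᵀ * P * vecMulVec w w * P * S = vecMulVec (w ᵥ* (P * S)) (w ᵥ* (P * S)) := by
  rw [mul_vecMulVec, transpose_mul_mul_mulVec_eq_vecMul hP, Matrix.mul_assoc, vecMulVec_mul]

theorem transpose_mul_mul_sub_smul_vecMulVec (m : R) :
    (S - m • vecMulVec w (w ᵥ* (P * S)))ᵀ * P * (S - m • vecMulVec w (w ᵥ* (P * S))) =
      Sᵀ * P * S - (2 * m - m ^ 2 * (w ⬝ᵥ (P *ᵥ w))) •
        vecMulVec (w ᵥ* (P * S)) (w ᵥ* (P * S)) := by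
  set u := w ᵥ* (P * S)
  have hleft : Sᵀ * P * vecMulVec w u = vecMulVec u u := by
    rw [mul_vecMulVec, transpose_mul_mul_mulVec_eq_vecMul hP]
  have hright : vecMulVec u w * P * S = vecMulVec u u := by
    rw [Matrix.mul_assoc, vecMulVec_mul]
  have hmiddle : vecMulVec u w * P * vecMulVec w u = (w ⬝ᵥ (P *ᵥ w)) • vecMulVec u u := by
    rw [vecMulVec_mul, vecMulVec_mul_vecMulVec, vecMulVec_smul, dotProduct_mulVec]
  simp only [transpose_sub, transpose_smul, transpose_vecMulVec, sub_mul, mul_sub,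
    Matrix.smul_mul, Matrix.mul_smul, hleft, hright, hmiddle]
  module

end RankOneFeedback

end Matrix

theorem pole_placement_general {n : ℕ}
    (S : Matrix (Fin n) (Fin n) ℝ)
    (μ₂ μₘ ζ : ℝ)
    (P : Matrix (Fin n) (Fin n) ℝ) (hP : P.PosDef)
    (hRiccati :
      (P - Sᵀ * P * S +
        ((1 - ζ ^ 2) / ((fun _ => (1 : ℝ)) ⬝ᵥ (P *ᵥ fun _ => (1 : ℝ)))) •
          (Sᵀ * P * vecMulVec (fun _ => (1 : ℝ)) (fun _ => (1 : ℝ)) * P * S)).PosDef)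
    (Γ : Fin n → ℝ)
    (hΓ : Γ = (2 / (μ₂ + μₘ) / ((fun _ => (1 : ℝ)) ⬝ᵥ (P *ᵥ fun _ => (1 : ℝ)))) •
      ((fun _ => (1 : ℝ)) ᵥ* (P * S))) :
    ∀ μ : ℝ, |1 - 2 * μ / (μ₂ + μₘ)| ≤ ζ →
      ∀ z ∈ spectrum ℂ ((S - μ • vecMulVec (fun _ => (1 : ℝ)) Γ).map Complex.ofReal),
        ‖z‖ < 1 := by
  intro μ hμ z hz
  rcases isEmpty_or_nonempty (Fin n) with _ | _
  · simp [spectrum.of_subsingleton] at hz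
  rw [mul_div_right_comm] at hμ
  generalize 2 / (μ₂ + μₘ) = k at hΓ hμ
  set ones : Fin n → ℝ := fun _ => 1
  set c := ones ⬝ᵥ (P *ᵥ ones)
  set u := ones ᵥ* (P * S)
  set m := μ * (k / c)
  set t := (ζ ^ 2 - (1 - k * μ) ^ 2) / c
  have hc : 0 < c := by
    simpa using hP.dotProduct_mulVec_pos (x := ones)
      (Function.ne_iff.2 ⟨Classical.arbitrary _, one_ne_zero⟩)
  have hsymm : P.IsSymm := isHermitian_iff_isSymm.1 hP.isHermitian
  have hgain : 2 * m - m ^ 2 * c = (1 - ζ ^ 2) / c + t := by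
    simp only [m, t]
    field_simp
    ring
  have ht : 0 ≤ t := div_nonneg (sub_nonneg.2 (sq_le_sq.2 (hμ.trans (le_abs_self ζ)))) hc.le
  have hStein : P - (S - μ • vecMulVec ones Γ)ᵀ * P * (S - μ • vecMulVec ones Γ) =
      P - Sᵀ * P * S + ((1 - ζ ^ 2) / c) • vecMulVec u u + t • vecMulVec u u := by
    rw [hΓ, vecMulVec_smul, smul_smul, transpose_mul_mul_sub_smul_vecMulVec hsymm, hgain]
    module
  rw [transpose_mul_mul_vecMulVec_mul_mul hsymm] at hRiccati
  refine norm_lt_one_of_mem_spectrum_map_ofReal hP ?_ hz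
  rw [hStein]
  exact hRiccati.add_posSemidef ((posSemidef_vecMulVec_self_star u).smul ht)

/-- Pole-placement lemma: if `P ≻ 0` satisfies the modified algebraic Riccati
inequality `P − SᵀPS + (1 − ζ²)(SᵀP𝟙𝟙ᵀPS)/(𝟙ᵀP𝟙) ≻ 0` and
`Γ = (2/(μ₂+μ_m))(𝟙ᵀPS)/(𝟙ᵀP𝟙)`, then for every `μ` with
`|1 − 2μ/(μ₂+μ_m)| ≤ ζ` the spectral radius of `S − μ𝟙Γ` is strictly less than one. -/
theorem pole_placement {n : ℕ}
    (S : Matrix (Fin n) (Fin n) ℝ)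
    (μ₂ μₘ ζ : ℝ) (hμ₂ : 0 < μ₂) (hμ : μ₂ ≤ μₘ) (hζ : 0 < ζ)
    (P : Matrix (Fin n) (Fin n) ℝ) (hP : P.PosDef)
    (hRiccati :
      (P - Sᵀ * P * S +
        ((1 - ζ ^ 2) / ((fun _ => (1 : ℝ)) ⬝ᵥ (P *ᵥ fun _ => (1 : ℝ)))) •
          (Sᵀ * P * vecMulVec (fun _ => (1 : ℝ)) (fun _ => (1 : ℝ)) * P * S)).PosDef)
    (Γ : Fin n → ℝ)
    (hΓ : Γ = (2 / (μ₂ + μₘ) / ((fun _ => (1 : ℝ)) ⬝ᵥ (P *ᵥ fun _ => (1 : ℝ)))) •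
      ((fun _ => (1 : ℝ)) ᵥ* (P * S))) :
    ∀ μ : ℝ, |1 - 2 * μ / (μ₂ + μₘ)| ≤ ζ →
      ∀ z ∈ spectrum ℂ ((S - μ • vecMulVec (fun _ => (1 : ℝ)) Γ).map Complex.ofReal),
        ‖z‖ < 1 :=
  pole_placement_general S μ₂ μₘ ζ P hP hRiccati Γ hΓ
end

section
/- Consider m sensors with symmetric nonnegative weights a_{ij} = a_{ji} ≥ 0 (1 ≤ i, j ≤ m). Let S ∈ ℝ^{n×n}, Γ ∈ ℝ^{1×n}, 𝟙_n the all-ones vector, and define S̃ = I_m ⊗ S, Γ̃ = I_m ⊗ Γ, B̃ = I_m ⊗ 𝟙_n, and L̃_i = e_i ⊗ 𝟙_n ∈ ℝ^{mn}, with e_i the i-th canonical basis vector of ℝᵐ. Let z_1,…,z_m : ℕ → ℝ be arbitrary scalar sequences. Define sequences η_i : ℕ → ℝ^{mn} by η_i(0) = 0 and η_i(k+1) = S̃η_i(k) + L̃_i z_i(k) + B̃ Σ_{j=1}^m a_{ij}(Γ̃η_j(k) − Γ̃η_i(k)), and sequences ξ_j : ℕ → ℝⁿ by ξ_j(0) =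 0 and ξ_j(k+1) = Sξ_j(k) + 𝟙_n z_j(k). Write η_i(k) = col(η_{i,1}(k),…,η_{i,m}(k)) with blocks η_{i,j}(k) ∈ ℝⁿ. Then for every k ≥ 0 and every j ∈ {1,…,m}: Σ_{i=1}^m η_{i,j}(k) = ξ_j(k). Consequently, for any matrices F_1,…,F_m ∈ ℝ^{n×n} and F = [F_1,…,F_m], the local fused estimates x̆_i(k) = mFη_i(k) satisfy (1/m)Σ_{i=1}^m x̆_i(k) = Σ_{j=1}^m F_j ξ_j(k) for all k ≥ 0. -/
open Matrix

/-- Consistency of the consensus-based distributed estimator (Algorithm 1):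
with symmetric weights, the block sums of the consensus states recover the
residual-driven local filters, `Σᵢ η_{i,j}(k) = ξⱼ(k)`, and consequently the
average of the fused local estimates `x̆ᵢ(k) = mFηᵢ(k)` equals `Σⱼ Fⱼ ξⱼ(k)`,
the (decomposed) optimal Kalman estimate. -/
theorem distributed_estimator_consistency {m n : ℕ}
    (a : Fin m → Fin m → ℝ)
    (hsymm : ∀ i j, a i j = a j i) (hnonneg : ∀ i j, 0 ≤ a i j)
    (S : Matrix (Fin n) (Fin n) ℝ) (Γ : Fin n → ℝ)
    (z : Fin m → ℕ → ℝ)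
    -- η i k j is the j-th n-dimensional block of the state ηᵢ(k) ∈ ℝ^{mn}
    (η : Fin m → ℕ → Fin m → Fin n → ℝ)
    (hη0 : ∀ i, η i 0 = 0)
    (hη : ∀ i k j, η i (k + 1) j =
      S *ᵥ η i k j + (fun _ => if j = i then z i k else 0) +
        fun _ => ∑ l, a i l * (Γ ⬝ᵥ η l k j - Γ ⬝ᵥ η i k j))
    (ξ : Fin m → ℕ → Fin n → ℝ)
    (hξ0 : ∀ j, ξ j 0 = 0)
    (hξ : ∀ j k, ξ j (k + 1) = S *ᵥ ξ j k + fun _ => z j k) :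
    (∀ k j, ∑ i, η i k j = ξ j k) ∧
      ∀ (F : Fin m → Matrix (Fin n) (Fin n) ℝ) (k : ℕ),
        (1 / (m : ℝ)) • ∑ i, ((m : ℝ) • ∑ j, (F j) *ᵥ η i k j) =
          ∑ j, (F j) *ᵥ ξ j k := by
  have main : ∀ k j, ∑ i, η i k j = ξ j k := by
    intro k
    induction k with
    | zero => intro j; simp [hη0, hξ0]
    | succ k ih =>
      intro j
      funext p
      have hs : (∑ i, η i (k+1) j) p = ∑ i, η i (k+1) j p := by simp
      rw [hs]
      simp only [hη, Pi.add_apply]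
      rw [Finset.sum_add_distrib, Finset.sum_add_distrib]
      have h1 : ∑ i, (S *ᵥ η i k j) p = (S *ᵥ ξ j k) p := by
        rw [← ih j]
        simp only [mulVec, dotProduct, Finset.sum_apply, Finset.mul_sum]
        rw [Finset.sum_comm]
      have h2 : ∑ i : Fin m, (if j = i then z i k else 0) = z j k := by simp
      have h3 : ∑ i, ∑ l, a i l * (Γ ⬝ᵥ η l k j - Γ ⬝ᵥ η i k j) = 0 := by
        have hswap : ∑ i, ∑ l, a i l * (Γ ⬝ᵥ η l k j)
            = ∑ i, ∑ l, a i l * (Γ ⬝ᵥ η i k j) := by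
          rw [Finset.sum_comm]
          exact Finset.sum_congr rfl fun l _ =>
            Finset.sum_congr rfl fun i _ => by rw [hsymm]
        simp only [mul_sub, Finset.sum_sub_distrib, hswap, sub_self]
      rw [hξ j k, h1, h2, h3]
      simp
  refine ⟨main, fun F k => ?_⟩
  have hT : ∑ i, ∑ j, F j *ᵥ η i k j = ∑ j, F j *ᵥ ξ j k := by
    rw [Finset.sum_comm]
    refine Finset.sum_congr rfl fun j _ => ?_
    rw [← main k j]
    funext p
    simp [mulVec, dotProduct, Finset.mul_sum]
    rw [Finset.sum_comm]
  calc (1/(m:ℝ)) • ∑ i, ((m:ℝ) • ∑ j, F j *ᵥ η i k j)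
      = (1/(m:ℝ)) • ((m:ℝ) • ∑ i, ∑ j, F j *ᵥ η i k j) := by
        rw [← Finset.smul_sum]
    _ = ((1/(m:ℝ)) * m) • ∑ j, F j *ᵥ ξ j k := by rw [hT, smul_smul]
    _ = ∑ j, F j *ᵥ ξ j k := by
        rcases Nat.eq_zero_or_pos m with hm | hm
        · subst hm; simp
        · rw [one_div, inv_mul_cancel₀ (by exact_mod_cast hm.ne'), one_smul]
end

section
/- Consider m agents with states η_i : ℕ → ℝ^{mn} satisfying η_i(0) = 0 and η_i(k+1) = S̃η_i(k) + B̃u_i(k) + L̃_i z_i(k), where S̃ = I_m ⊗ S, B̃ = I_m ⊗ 𝟙_n, L̃_i = e_i ⊗ 𝟙_n, z_1,…,z_m : ℕ → ℝ are arbitrary scalar sequences, and u_1,…,u_m : ℕ → ℝᵐ are arbitrary input sequences satisfying the consistency condition Σ_{i=1}^m u_i(k) = 0 for all k. Let ξ_j : ℕ → ℝⁿ satisfy ξ_j(0) = 0 and ξ_j(k+1) = Sξ_j(k) + 𝟙_n z_j(k). Write η_i(k) = col(η_{i,1}(k),…,η_{i,m}(k)) with blocks in ℝⁿ. Then for all k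 ≥ 0 and all j: Σ_{i=1}^m η_{i,j}(k) = ξ_j(k), and hence for any F = [F_1,…,F_m] the average of the local fused estimates x̆_i(k) = mFη_i(k) equals Σ_{j=1}^m F_j ξ_j(k), the output of the lossless Kalman filter decomposition. -/
open Matrix

/-- Consistency under a general synchronization strategy (Theorem 4, statement 1):
if the control inputs sum to zero across agents, `Σᵢ uᵢ(k) = 0`, then the block sums
of the agents' states recover the residual-driven local filters,
`Σᵢ η_{i,j}(k) = ξⱼ(k)`, and hence the average of the fused local estimates
`x̆ᵢ(k) = mFηᵢ(k)` equals `Σⱼ Fⱼ ξⱼ(k)`, the output of the lossless Kalman filter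
decomposition. -/
theorem general_synchronization_consistency {m n : ℕ}
    (S : Matrix (Fin n) (Fin n) ℝ)
    (z : Fin m → ℕ → ℝ)
    (u : Fin m → ℕ → Fin m → ℝ)
    (hu : ∀ k, ∑ i, u i k = 0)
    -- η i k j is the j-th n-dimensional block of the state ηᵢ(k) ∈ ℝ^{mn}
    (η : Fin m → ℕ → Fin m → Fin n → ℝ)
    (hη0 : ∀ i, η i 0 = 0)
    (hη : ∀ i k j, η i (k + 1) j =
      S *ᵥ η i k j + (fun _ => u i k j) + fun _ => if j = i then z i k else 0)
    (ξ : Fin m → ℕ → Fin n → ℝ)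
    (hξ0 : ∀ j, ξ j 0 = 0)
    (hξ : ∀ j k, ξ j (k + 1) = S *ᵥ ξ j k + fun _ => z j k) :
    (∀ k j, ∑ i, η i k j = ξ j k) ∧
      ∀ (F : Fin m → Matrix (Fin n) (Fin n) ℝ) (k : ℕ),
        (1 / (m : ℝ)) • ∑ i, ((m : ℝ) • ∑ j, (F j) *ᵥ η i k j) =
          ∑ j, (F j) *ᵥ ξ j k := by
  have key : ∀ k j, ∑ i, η i k j = ξ j k := by
    intro k
    induction k with
    | zero =>
      intro j
      simp [hη0, hξ0]
    | succ k ih =>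
      intro j
      have hsum : ∑ i, u i k j = 0 := by
        have := congrFun (hu k) j
        simpa using this
      simp only [hη, hξ]
      rw [Finset.sum_add_distrib, Finset.sum_add_distrib]
      have h1 : ∑ i, S *ᵥ η i k j = S *ᵥ ξ j k := by
        rw [← ih j]
        simp only [← Matrix.mulVecLin_apply, map_sum]
      have h2 : (∑ i, fun _ : Fin n => u i k j) = 0 := by
        ext x
        simpa using hsum
      have h3 : (∑ i, fun _ : Fin n => if j = i then z i k else 0)
          = fun _ : Fin n => z j k := by
        ext x
        simp
      rw [h1, h2, h3, add_zero]
  refine ⟨key, fun F k => ?_⟩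
  have hR : ∑ j, F j *ᵥ ξ j k = ∑ i, ∑ j, F j *ᵥ η i k j := by
    rw [Finset.sum_comm]
    congr 1
    ext j
    rw [← key k j]
    simp only [← Matrix.mulVecLin_apply, map_sum]
  rcases Nat.eq_zero_or_pos m with hm | hm
  · subst hm
    simp
  · have hm' : (m : ℝ) ≠ 0 := Nat.cast_ne_zero.mpr hm.ne'
    rw [← Finset.smul_sum, smul_smul, one_div, inv_mul_cancel₀ hm', one_smul, hR]
end

section
/- Let n, nᵘ, nˢ be integers with n = nᵘ + nˢ, and let A = diag(Aᵘ, Aˢ) ∈ ℝ^{n×n} be block diagonal with Aᵘ ∈ ℝ^{nᵘ×nᵘ}, Aˢ ∈ ℝ^{nˢ×nˢ}. Let C = [Cᵘ, Cˢ] ∈ ℝ^{1×n} be partitioned conformably, let Λ ∈ ℝ^{n×n}, β ∈ ℝⁿ, 𝟙 the all-ones vector of ℝⁿ, and let Gᵘ ∈ ℝ^{n×nᵘ} satisfy GᵘAᵘ − 𝟙CᵘAᵘ = ΛGᵘ and βᵀGᵘ = CᵘAᵘ; set G = [Gᵘ, 0] ∈ ℝ^{n×n}. Let x : ℕ → ℝⁿ,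 w : ℕ → ℝⁿ, v : ℕ → ℝ, y : ℕ → ℝ be sequences with x(k+1) = Ax(k) + w(k) and y(k) = Cx(k) + v(k), let ξ : ℕ → ℝⁿ satisfy ξ(k+1) = Λξ(k) + 𝟙y(k+1), and write xˢ(k) ∈ ℝ^{nˢ} for the last nˢ components of x(k). Define ε(k) = Gx(k) − ξ(k) and z(k) = y(k+1) − βᵀξ(k). Then for all k ≥ 0: (i) ε(k+1) = Λε(k) − 𝟙CˢAˢxˢ(k) + (G − 𝟙C)w(k) − 𝟙v(k+1), and (ii) z(k) = βᵀε(k) + CˢAˢxˢ(k) + Cw(k) + v(k+1). -/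
open Matrix

lemma ones_vecMulVec_mulVec {m k : Type*} [Fintype k] (u q : k → ℝ) :
    vecMulVec (fun _ : m => (1 : ℝ)) u *ᵥ q = (u ⬝ᵥ q) • (fun _ => (1 : ℝ)) := by
  funext r
  simp [vecMulVec_apply, mulVec, dotProduct, mul_comm]

/-- The residual dynamics of the reformulated local filter (equations (96)–(97)):
with `A = diag(Aᵘ, Aˢ)`, `C = [Cᵘ, Cˢ]`, `G = [Gᵘ, 0]` where
`GᵘAᵘ − 𝟙CᵘAᵘ = ΛGᵘ` and `βᵀGᵘ = CᵘAᵘ`, the error `ε(k) = Gx(k) − ξ(k)` and residual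
`z(k) = y(k+1) − βᵀξ(k)` satisfy
`ε(k+1) = Λε(k) − 𝟙CˢAˢxˢ(k) + (G − 𝟙C)w(k) − 𝟙v(k+1)` and
`z(k) = βᵀε(k) + CˢAˢxˢ(k) + Cw(k) + v(k+1)`. -/
theorem residual_dynamics {nu ns : ℕ}
    (Au : Matrix (Fin nu) (Fin nu) ℝ) (As : Matrix (Fin ns) (Fin ns) ℝ)
    (A : Matrix (Fin nu ⊕ Fin ns) (Fin nu ⊕ Fin ns) ℝ)
    (hA : A = Matrix.fromBlocks Au 0 0 As)
    (Cu : Fin nu → ℝ) (Cs : Fin ns → ℝ)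
    (C : (Fin nu ⊕ Fin ns) → ℝ) (hC : C = Sum.elim Cu Cs)
    (Λ : Matrix (Fin nu ⊕ Fin ns) (Fin nu ⊕ Fin ns) ℝ)
    (β : (Fin nu ⊕ Fin ns) → ℝ)
    (Gu : Matrix (Fin nu ⊕ Fin ns) (Fin nu) ℝ)
    (hGu1 : Gu * Au - vecMulVec (fun _ => (1 : ℝ)) Cu * Au = Λ * Gu)
    (hGu2 : β ᵥ* Gu = Cu ᵥ* Au)
    (G : Matrix (Fin nu ⊕ Fin ns) (Fin nu ⊕ Fin ns) ℝ)
    (hG : G = Matrix.of fun r c => Sum.elim (fun c' => Gu r c') (fun _ => (0 : ℝ)) c)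
    (x w : ℕ → (Fin nu ⊕ Fin ns) → ℝ) (v y : ℕ → ℝ)
    (hx : ∀ k, x (k + 1) = A *ᵥ x k + w k)
    (hy : ∀ k, y k = C ⬝ᵥ x k + v k)
    (ξ : ℕ → (Fin nu ⊕ Fin ns) → ℝ)
    (hξ : ∀ k, ξ (k + 1) = Λ *ᵥ ξ k + fun _ => y (k + 1))
    (xs : ℕ → Fin ns → ℝ) (hxs : ∀ k r, xs k r = x k (Sum.inr r))
    (ε : ℕ → (Fin nu ⊕ Fin ns) → ℝ) (hε : ∀ k, ε k = G *ᵥ x k - ξ k)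
    (z : ℕ → ℝ) (hz : ∀ k, z k = y (k + 1) - β ⬝ᵥ ξ k) :
    (∀ k, ε (k + 1) =
        Λ *ᵥ ε k - (Cs ⬝ᵥ (As *ᵥ xs k)) • (fun _ => (1 : ℝ)) +
          (G - vecMulVec (fun _ => (1 : ℝ)) C) *ᵥ w k -
          (v (k + 1)) • (fun _ => (1 : ℝ))) ∧
      ∀ k, z k = β ⬝ᵥ ε k + Cs ⬝ᵥ (As *ᵥ xs k) + C ⬝ᵥ w k + v (k + 1) := by
  -- structural facts
  have hGmul : ∀ p : (Fin nu ⊕ Fin ns) → ℝ, G *ᵥ p = Gu *ᵥ (p ∘ Sum.inl) := by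
    intro p
    funext r
    simp [hG, mulVec, dotProduct, Fintype.sum_sum_type, Function.comp]
  have hAm : ∀ p : (Fin nu ⊕ Fin ns) → ℝ,
      A *ᵥ p = Sum.elim (Au *ᵥ (p ∘ Sum.inl)) (As *ᵥ (p ∘ Sum.inr)) := by
    intro p
    rw [hA, fromBlocks_mulVec]
    simp
  have hCd : ∀ p : (Fin nu ⊕ Fin ns) → ℝ,
      C ⬝ᵥ p = Cu ⬝ᵥ (p ∘ Sum.inl) + Cs ⬝ᵥ (p ∘ Sum.inr) := by
    intro p
    simp [hC, dotProduct, Fintype.sum_sum_type, Function.comp]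
  -- key algebraic identities from the hypotheses
  have key1 : ∀ u : Fin nu → ℝ,
      Gu *ᵥ (Au *ᵥ u) =
        Λ *ᵥ (Gu *ᵥ u) + (Cu ⬝ᵥ (Au *ᵥ u)) • (fun _ => (1 : ℝ)) := by
    intro u
    have h := congrArg (fun M => M *ᵥ u) hGu1
    simp only [sub_mulVec, ← mulVec_mulVec] at h
    rw [ones_vecMulVec_mulVec] at h
    rw [← h]
    abel
  have key2 : ∀ u : Fin nu → ℝ, β ⬝ᵥ (Gu *ᵥ u) = Cu ⬝ᵥ (Au *ᵥ u) := by
    intro u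
    rw [dotProduct_mulVec, hGu2, ← dotProduct_mulVec]
  -- per-step decompositions
  have hx' : ∀ k, x (k + 1) =
      Sum.elim (Au *ᵥ (x k ∘ Sum.inl)) (As *ᵥ (x k ∘ Sum.inr)) + w k := by
    intro k; rw [hx k, hAm]
  have hGx : ∀ k, G *ᵥ x (k + 1) =
      Gu *ᵥ (Au *ᵥ (x k ∘ Sum.inl)) + Gu *ᵥ (w k ∘ Sum.inl) := by
    intro k
    rw [hGmul, hx' k]
    have : (Sum.elim (Au *ᵥ (x k ∘ Sum.inl)) (As *ᵥ (x k ∘ Sum.inr)) + w k) ∘ Sum.inl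
        = Au *ᵥ (x k ∘ Sum.inl) + (w k ∘ Sum.inl) := by
      funext r; simp
    rw [this, mulVec_add]
  have hy' : ∀ k, y (k + 1) =
      Cu ⬝ᵥ (Au *ᵥ (x k ∘ Sum.inl)) + Cu ⬝ᵥ (w k ∘ Sum.inl) +
        Cs ⬝ᵥ (As *ᵥ (x k ∘ Sum.inr)) + Cs ⬝ᵥ (w k ∘ Sum.inr) + v (k + 1) := by
    intro k
    rw [hy (k + 1), hx' k, hCd]
    have h1 : (Sum.elim (Au *ᵥ (x k ∘ Sum.inl)) (As *ᵥ (x k ∘ Sum.inr)) + w k) ∘ Sum.inl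
        = Au *ᵥ (x k ∘ Sum.inl) + (w k ∘ Sum.inl) := by funext r; simp
    have h2 : (Sum.elim (Au *ᵥ (x k ∘ Sum.inl)) (As *ᵥ (x k ∘ Sum.inr)) + w k) ∘ Sum.inr
        = As *ᵥ (x k ∘ Sum.inr) + (w k ∘ Sum.inr) := by funext r; simp
    rw [h1, h2, dotProduct_add, dotProduct_add]
    ring
  have hxsv : ∀ k, xs k = x k ∘ Sum.inr := by
    intro k; funext r; simp [hxs, Function.comp]
  constructor
  · intro k
    have hεk1 : ε (k + 1) =
        Gu *ᵥ (Au *ᵥ (x k ∘ Sum.inl)) + Gu *ᵥ (w k ∘ Sum.inl) -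
          (Λ *ᵥ ξ k + (y (k + 1)) • (fun _ => (1 : ℝ))) := by
      rw [hε (k + 1), hGx k, hξ k]
      congr 1
      funext r; simp
    rw [hεk1, key1 (x k ∘ Sum.inl), hy' k, hε k, mulVec_sub, hGmul,
      sub_mulVec, hGmul, ones_vecMulVec_mulVec, hCd, hxsv k]
    funext i
    simp only [Pi.add_apply, Pi.sub_apply, Pi.smul_apply, smul_eq_mul]
    ring
  · intro k
    rw [hz k, hy' k, hε k, dotProduct_sub, hGmul, key2, hCd, hxsv k]
    ring
end
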